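/- If π_p is injective, then its image π_p(V^N) equals the polydiagonal subspace {X ∈ V^n : X_{σ_i} = X_{σ_j} whenever σ_i(p) = σ_j(p)}, and this subspace is invariant under Γ_f for every f : V^n → V. -/

import Mathlib

/-- The regular-representation maps `A_σ` on `V^n = (Σ → V)`. -/
def Amap {M : Type*} [Monoid M] {V : Type*} (m : M) : (M → V) → (M → V) :=
  fun X => fun j => X (j * m)

/-- The fundamental network vector field `Γ_f` on `V^n`: `(Γ_f)_σ = f ∘ A_σ`. -/
def GammaF {M : Type*} [Monoid M] {V : Type*} (f : (M → V) → V) :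
    (M → V) → (M → V) :=
  fun X => fun m => f (Amap m X)

/-- The map `π_p : V^N → V^n`, `(π_p x)_σ = x_{σ(p)}`. -/
def piP {M : Type*} [Monoid M] {N : ℕ} {V : Type*}
    (φ : M →* Function.End (Fin N)) (p : Fin N) : (Fin N → V) → (M → V) :=
  fun x => fun j => x (φ j p)

/-!
A vector `X ∈ V^n` is of the form `π_p x` exactly when it factors through the orbit map
`σ ↦ σ(p)`, which is the polydiagonal condition. The polydiagonal is `Γ_f`-invariant because
`(A_{σᵢ} X)_{σₖ} = X_{σₖ ∘ σᵢ}` only depends on `σᵢ` through `σₖ(σᵢ(p))`, hence through `σᵢ(p)`.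
-/

section Polydiagonal

variable {M : Type*} [Monoid M] {N : ℕ} {V : Type*} (φ : M →* Function.End (Fin N)) (p : Fin N)

def polydiagonal : Set (M → V) :=
  {X | X.FactorsThrough fun j => φ j p}

theorem range_piP : Set.range (piP (V := V) φ p) = polydiagonal φ p := by
  ext X
  have : Nonempty V := ⟨X 1⟩
  exact (exists_congr fun _ => eq_comm).trans (Function.factorsThrough_iff X).symm

variable {φ p}

theorem Amap_eq_of_mem_polydiagonal {X : M → V} (hX : X ∈ polydiagonal φ p) {i j : M}
    (h : φ i p = φ j p) : Amap i X = Amap j X :=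
  funext fun k => hX <|
    show φ (k * i) p = φ (k * j) p by rw [map_mul, map_mul]; exact congrArg (φ k) h

theorem GammaF_mem_polydiagonal (f : (M → V) → V) {X : M → V} (hX : X ∈ polydiagonal φ p) :
    GammaF f X ∈ polydiagonal φ p :=
  fun _ _ h => congrArg f (Amap_eq_of_mem_polydiagonal hX h)

end Polydiagonal

theorem range_piP_polydiagonal_general {M : Type*} [Monoid M] {N : ℕ}
    {V : Type*}
    (φ : M →* Function.End (Fin N)) (p : Fin N) :
    Set.range (piP (V := V) φ p) =
      {X : M → V | ∀ i j : M, φ i p = φ j p → X i = X j} ∧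
    ∀ (f : (M → V) → V), ∀ X ∈ {X : M → V | ∀ i j : M, φ i p = φ j p → X i = X j},
      GammaF f X ∈ {X : M → V | ∀ i j : M, φ i p = φ j p → X i = X j} :=
  ⟨range_piP φ p, fun f _ hX => GammaF_mem_polydiagonal f hX⟩

/-- if `π_p` is injective then its image equals the polydiagonal
`{X : X_{σᵢ} = X_{σⱼ} whenever σᵢ(p) = σⱼ(p)}`, and this subspace is invariant
under `Γ_f` for every `f`. -/
theorem range_piP_polydiagonal {M : Type*} [Monoid M] [Fintype M] {N : ℕ}
    {V : Type*} [AddCommGroup V] [Module ℝ V]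
    (φ : M →* Function.End (Fin N)) (p : Fin N)
    (hinj : Function.Injective (piP (V := V) φ p)) :
    Set.range (piP (V := V) φ p) =
      {X : M → V | ∀ i j : M, φ i p = φ j p → X i = X j} ∧
    ∀ (f : (M → V) → V), ∀ X ∈ {X : M → V | ∀ i j : M, φ i p = φ j p → X i = X j},
      GammaF f X ∈ {X : M → V | ∀ i j : M, φ i p = φ j p → X i = X j} :=
  range_piP_polydiagonal_general φ p
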